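/- arXiv:1202.6200 — 5 statements merged into one kernel-verified Lean document; each statement's English description precedes it below -/
import Mathlib

section
/- Let F be a field with char(F) ≠ 2 and let t ∈ F with t ≠ 0 and t ≠ -1. Then the polynomial (Y² + t)² + 4(tY)² in F[Y] is not the square of any polynomial in F[Y]. -/
/-!
If `g ^ 2 = Y⁴ + b Y² + c`, then `g` is quadratic with leading coefficient `±1`, and the `Y³`
coefficient kills its linear term (as `2 ≠ 0`); so `g = ±Y² + a₀`, which forces `b² = 4c`.
Here `b = 2t + 4t²` and `c = t²`, so `b² - 4c = 16 t³ (t + 1) ≠ 0`.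
-/

open Polynomial

theorem discrim_eq_zero_of_biquadratic_eq_sq {R : Type*} [CommRing R] [IsDomain R]
    (h2 : (2 : R) ≠ 0) {b c : R} {g : R[X]} (hg : X ^ 4 + C b * X ^ 2 + C c = g ^ 2) :
    discrim 1 b c = 0 := by
  have hdeg : g.natDegree ≤ 2 := by
    have h := congrArg natDegree hg
    have : (X ^ 4 + C b * X ^ 2 + C c : R[X]).natDegree = 4 := by compute_degree!
    rw [natDegree_pow] at h
    omega
  set a₂ := g.coeff 2
  set a₁ := g.coeff 1
  set a₀ := g.coeff 0
  have hsq : g ^ 2 = C (a₂ ^ 2) * X ^ 4 + C (2 * a₂ * a₁) * X ^ 3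
      + C (a₁ ^ 2 + 2 * a₂ * a₀) * X ^ 2 + C (2 * a₁ * a₀) * X + C (a₀ ^ 2) := by
    rw [eq_quadratic_of_degree_le_two (natDegree_le_iff_degree_le.mp hdeg)]
    simp only [map_add, map_mul, map_pow, map_ofNat]
    ring
  rw [hsq] at hg
  have hcoeff (n : ℕ) := congrArg (coeff · n) hg
  have e4 := hcoeff 4
  have e3 := hcoeff 3
  have e2 := hcoeff 2
  have e0 := hcoeff 0
  simp only [coeff_add, coeff_C_mul, coeff_X_pow, coeff_X, coeff_C] at e4 e3 e2 e0
  norm_num at e4 e3 e2 e0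
  have ha₁ : a₁ = 0 := by
    rcases e3 with (h | h) | h
    · exact absurd h h2
    · simp [h] at e4
    · exact h
  rw [discrim, e2, e0, ha₁]
  linear_combination (-4 * a₀ ^ 2) * e4

/-- For a field `F` of characteristic `≠ 2` and `t ∈ F` with `t ≠ 0`,
`t ≠ -1`, the polynomial `(Y² + t)² + 4 (t Y)²` is not a square in `F[Y]`. -/
theorem stmt_1 {F : Type*} [Field F] (h2 : ringChar F ≠ 2)
    (t : F) (ht0 : t ≠ 0) (ht1 : t ≠ -1) :
    ¬ ∃ g : F[X], (X ^ 2 + C t) ^ 2 + C 4 * (C t * X) ^ 2 = g ^ 2 := by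
  rintro ⟨g, hg⟩
  have hbiquad : (X ^ 2 + C t) ^ 2 + C 4 * (C t * X) ^ 2
      = X ^ 4 + C (2 * t + 4 * t ^ 2) * X ^ 2 + C (t ^ 2) := by
    simp only [map_add, map_mul, map_pow, map_ofNat]
    ring
  have htwo : (2 : F) ≠ 0 := Ring.two_ne_zero h2
  have hdiscrim : discrim 1 (2 * t + 4 * t ^ 2) (t ^ 2) = 2 ^ 4 * t ^ 3 * (t + 1) := by
    rw [discrim]
    ring
  have hzero := discrim_eq_zero_of_biquadratic_eq_sq htwo (hbiquad ▸ hg)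
  rw [hdiscrim] at hzero
  exact mul_ne_zero (mul_ne_zero (pow_ne_zero 4 htwo) (pow_ne_zero 3 ht0))
    (add_eq_zero_iff_eq_neg.not.mpr ht1) hzero
end

section
/- Let F be a field with char(F) ≠ 2 and t ∈ F with t ≠ 0 and t ≠ -1. Then the polynomial X² + X - γ(Y,t)², where γ(Y,t) = Yt/(Y² + t), is irreducible over the rational function field F(Y). -/
open Polynomial

lemma aux_no_poly {F : Type*} [Field F] (t : F) (ht0 : t ≠ 0) (ht1 : t ≠ -1)
    (p : F[X]) (hp : p * (p + (X ^ 2 + C t)) = C (t ^ 2) * X ^ 2) : False := by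
  have ht1' : t + 1 ≠ 0 := fun h => ht1 (by linear_combination h)
  have hrhs : (C (t ^ 2) * X ^ 2 : F[X]) ≠ 0 := by
    simp [pow_eq_zero_iff, ht0]
  have hp0 : p ≠ 0 := by rintro rfl; rw [zero_mul] at hp; exact hrhs hp.symm
  have hs0 : p + (X ^ 2 + C t) ≠ 0 := by
    intro h; rw [h, mul_zero] at hp; exact hrhs hp.symm
  have hq2 : (X ^ 2 + C t : F[X]).natDegree = 2 := natDegree_X_pow_add_C
  have hdeg : p.natDegree + (p + (X ^ 2 + C t)).natDegree = 2 := by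
    rw [← natDegree_mul hp0 hs0, hp]
    compute_degree!
  have hd : p.natDegree = 0 ∨ p.natDegree = 1 ∨ p.natDegree = 2 := by omega
  rcases hd with hd | hd | hd
  · obtain ⟨c, rfl⟩ := natDegree_eq_zero.mp hd
    have hc0 : c ≠ 0 := fun h => hp0 (by rw [h, map_zero])
    have h0 := congrArg (fun r => coeff r 0) hp
    have h2 := congrArg (fun r => coeff r 2) hp
    simp only [coeff_C_mul, coeff_add, coeff_X_pow, coeff_C] at h0 h2
    norm_num at h0 h2
    rcases h0 with h | h
    · exact hc0 h
    have : t * (t + 1) = 0 := by linear_combination h - h2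
    rcases mul_eq_zero.mp this with h | h
    · exact ht0 h
    · exact ht1' h
  · have : (p + (X ^ 2 + C t)).natDegree = 2 := by
      rw [natDegree_add_eq_right_of_natDegree_lt (by omega), hq2]
    omega
  · have h0d : (p + (X ^ 2 + C t)).natDegree = 0 := by omega
    obtain ⟨c, hc⟩ := natDegree_eq_zero.mp h0d
    have hc0 : c ≠ 0 := fun h => hs0 (by rw [← hc, h, map_zero])
    rw [← hc] at hp
    have hpc : p = C c - (X ^ 2 + C t) := by linear_combination -hc
    rw [hpc] at hp
    have h0 := congrArg (fun r => coeff r 0) hp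
    have h2 := congrArg (fun r => coeff r 2) hp
    simp only [coeff_C_mul, coeff_add, coeff_sub, coeff_mul_C, coeff_X_pow, coeff_C] at h0 h2
    norm_num at h0 h2
    rcases h0 with h | h
    swap
    · exact hc0 h
    have : t * (t + 1) = 0 := by linear_combination -h2 - h
    rcases mul_eq_zero.mp this with h | h
    · exact ht0 h
    · exact ht1' h

/-- For a field `F` of characteristic `≠ 2` and `t ∈ F \ {0, -1}`,
the polynomial `X² + X - γ(Y,t)²` with `γ(Y,t) = Y t / (Y² + t)` is irreducible
over the rational function field `F(Y)`. -/
theorem stmt_2 {F : Type*} [Field F] (h2 : ringChar F ≠ 2)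
    (t : F) (ht0 : t ≠ 0) (ht1 : t ≠ -1) :
    Irreducible
      (X ^ 2 + X -
        C ((RatFunc.X * RatFunc.C t / (RatFunc.X ^ 2 + RatFunc.C t)) ^ 2) :
        Polynomial (RatFunc F)) := by
  set γ : RatFunc F := RatFunc.X * RatFunc.C t / (RatFunc.X ^ 2 + RatFunc.C t) with hγ
  set D : RatFunc F := RatFunc.X ^ 2 + RatFunc.C t with hDdef
  have hDmap : D = algebraMap (Polynomial F) (RatFunc F) (X ^ 2 + C t) := by
    simp [hDdef, map_add, map_pow, RatFunc.algebraMap_X, RatFunc.algebraMap_C]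
  have hD : D ≠ 0 := by
    rw [hDmap]
    exact (map_ne_zero_iff _ (IsFractionRing.injective (Polynomial F) (RatFunc F))).mpr
      (X_pow_add_C_ne_zero two_pos t)
  have hmon : (X ^ 2 + X - C (γ ^ 2) : Polynomial (RatFunc F)).Monic := by
    have heq : (X ^ 2 + X - C (γ ^ 2) : Polynomial (RatFunc F))
        = X ^ 2 + (X - C (γ ^ 2)) := by ring
    rw [heq]
    apply monic_X_pow_add
    rw [degree_X_sub_C]
    norm_num
  have hnd : (X ^ 2 + X - C (γ ^ 2) : Polynomial (RatFunc F)).natDegree = 2 := by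
    compute_degree!
  rw [hmon.irreducible_iff_roots_eq_zero_of_degree_le_three (by omega) (by omega),
    Multiset.eq_zero_iff_forall_notMem]
  intro x hx
  have hroot := (mem_roots hmon.ne_zero).mp hx
  have hx2 : x ^ 2 + x - γ ^ 2 = 0 := by simpa [IsRoot] using hroot
  have hγD : γ * D = RatFunc.X * RatFunc.C t := div_mul_cancel₀ _ hD
  have key : (x * D) ^ 2 + (x * D) * D = (RatFunc.X * RatFunc.C t) ^ 2 := by
    linear_combination D ^ 2 * hx2 + (γ * D + RatFunc.X * RatFunc.C t) * hγD
  have hint : IsIntegral (Polynomial F) (x * D) := by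
    refine ⟨X ^ 2 + (C (X ^ 2 + C t) * X - C ((X * C t) ^ 2)), ?_, ?_⟩
    · apply monic_X_pow_add
      have hdb : (C (X ^ 2 + C t) * X - C ((X * C t) ^ 2) : Polynomial (Polynomial F)).degree ≤ 1 := by
        compute_degree
      exact lt_of_le_of_lt hdb (by norm_num)
    · simp only [eval₂_add, eval₂_sub, eval₂_mul, eval₂_pow, eval₂_X, eval₂_C,
        map_add, map_pow, map_mul, RatFunc.algebraMap_X, RatFunc.algebraMap_C]
      linear_combination key
  obtain ⟨p, hp⟩ := IsIntegrallyClosed.isIntegral_iff.mp hint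
  refine aux_no_poly t ht0 ht1 p ?_
  apply IsFractionRing.injective (Polynomial F) (RatFunc F)
  simp only [map_add, map_mul, map_pow, RatFunc.algebraMap_X, RatFunc.algebraMap_C, hp]
  linear_combination key
end

section
/- Let F be a field of characteristic 2 and let t ∈ F be a nonsquare. Then the polynomial X² + X + γ(Y,t), where γ(Y,t) = Yt/(Y² + t), has no root in F(Y), and hence X² + X - γ(Y,t)² is irreducible over F(Y). -/
open Polynomial

/-!
Write `γ = c / p` with `p = Y² + t`, which is prime in `F[Y]` since `t` is not a square, and
`c = Y t`, which `p` does not divide. A root `x = a / b` (in lowest terms) of `X² + X + γ` gives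
`p (a² + a b) + c b² = 0`, so `p ∣ b`, then `p² ∣ p a²`, so `p ∣ a` as well: the `p`-adic valuation
of `x² + x` is even or nonnegative, that of `γ` is `-1`. In characteristic 2, `x ↦ x + γ` turns
roots of `X² + X - γ²` into roots of `X² + X + γ`, and a quadratic without roots is irreducible.
-/

theorem Prime.dvd_and_dvd_of_mul_add_mul_sq_eq_zero {A : Type*} [CommRing A] [IsDomain A]
    {p a b c : A} (hp : Prime p) (hc : ¬ p ∣ c) (h : p * (a ^ 2 + a * b) + c * b ^ 2 = 0) :
    p ∣ a ∧ p ∣ b := by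
  have hpb : p ∣ b := by
    have hcb : p ∣ c * b ^ 2 := ⟨-(a ^ 2 + a * b), by linear_combination h⟩
    exact hp.dvd_of_dvd_pow ((hp.dvd_mul.mp hcb).resolve_left hc)
  obtain ⟨d, rfl⟩ := hpb
  have ha : a ^ 2 = p * (-(a * d) - c * d ^ 2) :=
    mul_left_cancel₀ hp.ne_zero (by linear_combination h)
  exact ⟨hp.dvd_of_dvd_pow (ha ▸ dvd_mul_right p _), dvd_mul_right p d⟩

theorem IsFractionRing.sq_add_self_add_div_ne_zero {A K : Type*} [CommRing A] [IsDomain A]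
    [UniqueFactorizationMonoid A] [Field K] [Algebra A K] [IsFractionRing A K]
    {p c : A} (hp : Prime p) (hc : ¬ p ∣ c) (x : K) :
    x ^ 2 + x + algebraMap A K c / algebraMap A K p ≠ 0 := by
  intro hx
  obtain ⟨a, ⟨b, hb⟩, hab, rfl⟩ := IsFractionRing.exists_reduced_fraction A x
  have hb0 : algebraMap A K b ≠ 0 := IsFractionRing.to_map_ne_zero_of_mem_nonZeroDivisors hb
  have hp0 : algebraMap A K p ≠ 0 :=
    (map_ne_zero_iff _ (IsFractionRing.injective A K)).mpr hp.ne_zero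
  have hcleared : p * (a ^ 2 + a * b) + c * b ^ 2 = 0 := by
    apply IsFractionRing.injective A K
    rw [IsFractionRing.mk'_eq_div] at hx
    field_simp at hx
    simp only [map_add, map_mul, map_pow, map_zero]
    linear_combination hx
  obtain ⟨hpa, hpb⟩ := hp.dvd_and_dvd_of_mul_add_mul_sq_eq_zero hc hcleared
  exact hp.not_isUnit (hab hpa hpb)

theorem irreducible_X_sq_add_X_sub_C_sq {K : Type*} [Field K] [CharP K 2] {γ : K}
    (h : ∀ x : K, x ^ 2 + x + γ ≠ 0) : Irreducible (X ^ 2 + X - C (γ ^ 2) : K[X]) := by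
  have hdeg : (X ^ 2 + X - C (γ ^ 2) : K[X]).natDegree = 2 := by compute_degree!
  rw [irreducible_iff_roots_eq_zero_of_degree_le_three (by omega) (by omega),
    Multiset.eq_zero_iff_forall_notMem]
  intro r hmem
  have hr : r ^ 2 + r - γ ^ 2 = 0 := by simpa using isRoot_of_mem_roots hmem
  apply h (r + γ)
  linear_combination hr + (γ ^ 2 + r * γ + γ) * CharTwo.two_eq_zero (R := K)

theorem irreducible_X_sq_add_C_of_charTwo {F : Type*} [Field F] [CharP F 2] {t : F}
    (ht : ∀ s : F, s ^ 2 ≠ t) : Irreducible (X ^ 2 + C t : F[X]) := by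
  rw [← CharTwo.sub_eq_add]
  exact X_pow_sub_C_irreducible_of_prime Nat.prime_two ht

theorem X_sq_add_C_not_dvd_X_mul_C {F : Type*} [Field F] {s t : F} (ht : t ≠ 0) :
    ¬ (X ^ 2 + C s : F[X]) ∣ X * C t := by
  intro hdvd
  have hdeg := natDegree_le_of_dvd hdvd (mul_ne_zero X_ne_zero (C_ne_zero.mpr ht))
  rw [natDegree_X_mul (C_ne_zero.mpr ht), natDegree_C, natDegree_X_pow_add_C] at hdeg
  omega

/-- Let `F` be a field of characteristic 2 and `t ∈ F` a nonsquare.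
With `γ = Y t / (Y² + t) ∈ F(Y)`, the polynomial `X² + X + γ` has no root in `F(Y)`,
and hence `X² + X - γ²` is irreducible over `F(Y)`. -/
theorem stmt_4 {F : Type*} [Field F] (h2 : ringChar F = 2)
    (t : F) (ht : ∀ s : F, s ^ 2 ≠ t) :
    (∀ x : RatFunc F,
        x ^ 2 + x + RatFunc.X * RatFunc.C t / (RatFunc.X ^ 2 + RatFunc.C t) ≠ 0) ∧
      Irreducible
        (X ^ 2 + X -
          C ((RatFunc.X * RatFunc.C t / (RatFunc.X ^ 2 + RatFunc.C t)) ^ 2) :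
          Polynomial (RatFunc F)) := by
  have : CharP F 2 := ringChar.of_eq h2
  have : CharP (RatFunc F) 2 := charP_of_injective_algebraMap' F 2
  have hp : Prime (X ^ 2 + C t : F[X]) := (irreducible_X_sq_add_C_of_charTwo ht).prime
  have hc : ¬ (X ^ 2 + C t : F[X]) ∣ X * C t :=
    X_sq_add_C_not_dvd_X_mul_C (fun h => ht 0 (by simp [h]))
  have hroots : ∀ x : RatFunc F,
      x ^ 2 + x + RatFunc.X * RatFunc.C t / (RatFunc.X ^ 2 + RatFunc.C t) ≠ 0 := by
    simpa only [map_mul, map_add, map_pow, RatFunc.algebraMap_X, RatFunc.algebraMap_C] using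
      IsFractionRing.sq_add_self_add_div_ne_zero (K := RatFunc F) hp hc
  exact ⟨hroots, irreducible_X_sq_add_X_sub_C_sq hroots⟩
end

section
/- The field ℚ_tr of totally real algebraic numbers is not Hilbertian. -/
open Polynomial

/-- A field `F` is Hilbertian if for every polynomial `f(X, Y)` (a polynomial in `X`
over `F[Y]`) that is irreducible and separable in `X` over the rational function
field `F(Y)`, there are infinitely many `y ∈ F` such that the specialization
`f(X, y)` is irreducible over `F`. -/
def IsHilbertian (F : Type*) [Field F] : Prop :=
  ∀ f : Polynomial (Polynomial F),
    Irreducible (f.map (algebraMap (Polynomial F) (RatFunc F))) →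
    (f.map (algebraMap (Polynomial F) (RatFunc F))).Separable →
    {y : F | Irreducible (f.map (Polynomial.evalRingHom y))}.Infinite

/-!
Take `f(X, Y) = X² + X - Y²`, with discriminant `1 + 4Y²`. Over `K(Y)` the discriminant is not a
square: `K[Y]` is integrally closed, so a square root would be a polynomial `v`, and then
`(v - 2Y)(v + 2Y) = 1` makes `4Y` a difference of two constants. Hence `f` is irreducible over
`K(Y)`. But for a totally real `y`, every embedding sends `1 + 4y²` to a positive real, so its
square roots are again totally real and `f(X, y)` splits over `ℚ_tr`.
-/

namespace Polynomial

theorem not_irreducible_X_sq_add_X_sub_C_iff {K : Type*} [Field K] [NeZero (2 : K)] (c : K) :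
    ¬ Irreducible (X ^ 2 + X - C c : K[X]) ↔ IsSquare (1 + 4 * c) := by
  have hm : (X ^ 2 + X - C c : K[X]).Monic := by monicity!
  have hd : (X ^ 2 + X - C c : K[X]).natDegree = 2 := by compute_degree!
  rw [hm.not_irreducible_iff_exists_add_mul_eq_coeff hd]
  simp only [coeff_sub, coeff_add, coeff_X_pow, OfNat.zero_ne_ofNat, ↓reduceIte, coeff_X,
    one_ne_zero, add_zero, coeff_C, zero_sub, OfNat.one_ne_ofNat, zero_add, sub_zero]
  constructor
  · rintro ⟨c₁, c₂, hprod, hsum⟩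
    exact ⟨c₁ - c₂, by linear_combination (1 + c₁ + c₂) * hsum - 4 * hprod⟩
  · rintro ⟨u, hu⟩
    refine ⟨(1 - u) / 2, (1 + u) / 2, ?_, ?_⟩ <;> field_simp
    · linear_combination -hu
    · ring

theorem not_isSquare_one_add_four_mul_X_sq {R : Type*} [CommRing R] [IsDomain R]
    [NeZero (2 : R)] : ¬ IsSquare (1 + 4 * X ^ 2 : R[X]) := by
  rintro ⟨v, hv⟩
  have hprod : (v + 2 * X) * (v - 2 * X) = 1 := by linear_combination -hv
  have hdiff : v + 2 * X - (v - 2 * X) = C 4 * X := by rw [C_ofNat]; ring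
  have h4 : (4 : R) ≠ 0 := by
    rw [show (4 : R) = 2 * 2 by norm_num]
    exact mul_ne_zero two_ne_zero two_ne_zero
  have hle := natDegree_sub_le (v + 2 * X) (v - 2 * X)
  rw [natDegree_eq_zero_of_isUnit (.of_mul_eq_one _ hprod),
    natDegree_eq_zero_of_isUnit (.of_mul_eq_one _ ((mul_comm _ _).trans hprod)), hdiff,
    natDegree_C_mul_X 4 h4] at hle
  omega

end Polynomial

namespace RatFunc

theorem not_isSquare_one_add_four_mul_X_sq {K : Type*} [Field K] [NeZero (2 : K)] :
    ¬ IsSquare (1 + 4 * X ^ 2 : RatFunc K) := by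
  rintro ⟨u, hu⟩
  have hu' : u ^ 2 = algebraMap K[X] (RatFunc K) (1 + 4 * Polynomial.X ^ 2) := by
    simp [sq, ← hu, algebraMap_X, map_ofNat]
  obtain ⟨v, rfl⟩ := IsIntegrallyClosed.exists_algebraMap_eq_of_isIntegral_pow two_pos
    (hu' ▸ isIntegral_algebraMap)
  refine Polynomial.not_isSquare_one_add_four_mul_X_sq
    ⟨v, IsFractionRing.injective K[X] (RatFunc K) ?_⟩
  rw [map_mul, ← sq, hu']

theorem irreducible_X_sq_add_X_sub_C_X_sq {K : Type*} [Field K] [NeZero (2 : K)] :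
    Irreducible (Polynomial.X ^ 2 + Polynomial.X - Polynomial.C (X ^ 2) : (RatFunc K)[X]) := by
  have : NeZero (2 : RatFunc K) := by
    simpa [map_ofNat] using NeZero.of_injective (algebraMap K (RatFunc K)).injective (a := (2 : K))
  rw [← not_not (a := Irreducible _), Polynomial.not_irreducible_X_sq_add_X_sub_C_iff]
  exact not_isSquare_one_add_four_mul_X_sq

end RatFunc

theorem Complex.exists_ofReal_eq_of_sq_eq_ofReal {w : ℂ} {s : ℝ} (hs : 0 ≤ s) (h : w ^ 2 = s) :
    ∃ x : ℝ, w = x := by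
  have hsq : ((√s : ℝ) : ℂ) ^ 2 = s := by rw [← Complex.ofReal_pow, Real.sq_sqrt hs]
  rcases sq_eq_sq_iff_eq_or_eq_neg.mp (h.trans hsq.symm) with h' | h'
  · exact ⟨√s, h'⟩
  · exact ⟨-√s, by push_cast; exact h'⟩

theorem Subfield.isSquare_of_forall_embedding_nonneg {L : Type*} [Field L] [IsAlgClosed L]
    (F : Subfield L) (hF : ∀ x : L, (∀ σ : L →+* ℂ, ∃ r : ℝ, σ x = r) → x ∈ F) {x : F}
    (hx : ∀ σ : L →+* ℂ, ∃ r : ℝ, 0 ≤ r ∧ σ x = r) : IsSquare x := by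
  obtain ⟨z, hz⟩ := IsAlgClosed.exists_pow_nat_eq (x : L) two_pos
  have hzF : z ∈ F := hF z fun σ ↦ by
    obtain ⟨r, hr, hσx⟩ := hx σ
    exact Complex.exists_ofReal_eq_of_sq_eq_ofReal hr (by rw [← map_pow, hz, hσx])
  exact ⟨⟨z, hzF⟩, Subtype.ext (hz.symm.trans (sq z))⟩

/-- The field `ℚ_tr` of totally real algebraic numbers (the elements of
a fixed algebraic closure of `ℚ` all of whose images under every embedding into `ℂ`
are real) is not Hilbertian. -/
theorem stmt_8 (F : Subfield (AlgebraicClosure ℚ))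
    (hF : ∀ x : AlgebraicClosure ℚ, x ∈ F ↔
      ∀ σ : AlgebraicClosure ℚ →+* ℂ, ∃ r : ℝ, σ x = (r : ℂ)) :
    ¬ IsHilbertian F := by
  intro hH
  let f : F[X][X] := X ^ 2 + X - C (X ^ 2)
  have hirr : Irreducible (f.map (algebraMap F[X] (RatFunc F))) := by
    simpa [f, RatFunc.algebraMap_X] using RatFunc.irreducible_X_sq_add_X_sub_C_X_sq (K := F)
  obtain ⟨y, hy⟩ := (hH f hirr hirr.separable).nonempty
  have hsq : IsSquare (1 + 4 * y ^ 2) := F.isSquare_of_forall_embedding_nonneg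
    (fun x ↦ (hF x).2) fun σ ↦ by
      obtain ⟨r, hr⟩ := (hF y).1 y.2 σ
      have h4 : σ ((4 : F) : AlgebraicClosure ℚ) = 4 := map_ofNat σ 4
      exact ⟨1 + 4 * r ^ 2, by positivity, by simp [hr, h4]⟩
  exact (not_irreducible_X_sq_add_X_sub_C_iff (y ^ 2)).2 hsq (by simpa [f] using hy)
end

section
/- Let F be a field of characteristic ≠ 2, t ∈ F \ {0, -1}. Then 1 + 4·(Yt/(Y²+t))² is not a square in the rational function field F(Y). -/
/-!
Clearing the denominator `(Y² + t)²`, the element is a square in `F(Y)` iff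
`P = (Y² + t)² + 4t²Y² = Y⁴ + (2t + 4t²)Y² + t²` is a square in `F(Y)`, hence (`F[Y]` being
integrally closed) in `F[Y]`. A square root of a monic biquadratic `Y⁴ + bY² + c` must be
`±(Y² + e)` with `2e = b`, `e² = c`, so `b² = 4c`; for `P` this reads `16t³(1 + t) = 0`.
-/

open Polynomial

theorem IsIntegrallyClosed.exists_pow_eq_of_pow_eq_algebraMap {R K : Type*} [CommRing R]
    [IsDomain R] [IsIntegrallyClosed R] [Field K] [Algebra R K] [IsFractionRing R K] {n : ℕ}
    (hn : 0 < n) {x : K} {r : R} (hx : x ^ n = algebraMap R K r) :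
    ∃ y : R, y ^ n = r ∧ algebraMap R K y = x := by
  obtain ⟨y, rfl⟩ := exists_algebraMap_eq_of_isIntegral_pow hn (hx ▸ isIntegral_algebraMap)
  exact ⟨y, IsFractionRing.injective R K (by rw [map_pow, hx]), rfl⟩

theorem Polynomial.discrim_eq_zero_of_isSquare_X_pow_four_add {R : Type*} [CommRing R]
    [IsDomain R] (h2 : (2 : R) ≠ 0) {b c : R} (h : IsSquare (X ^ 4 + C b * X ^ 2 + C c)) :
    discrim 1 b c = 0 := by
  obtain ⟨q, hq⟩ := h
  have hdeg : (q * q).natDegree = 4 := by rw [← hq]; compute_degree!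
  have hq0 : q ≠ 0 := by rintro rfl; simp at hdeg
  have hq2 : q.degree ≤ 2 := by
    rw [natDegree_mul hq0 hq0] at hdeg
    exact degree_le_natDegree.trans (by norm_cast; omega)
  set a := q.coeff 2
  set d := q.coeff 1
  set e := q.coeff 0
  have hexp : q * q = C (a ^ 2) * X ^ 4 + C (2 * a * d) * X ^ 3 + C (d ^ 2 + 2 * a * e) * X ^ 2
      + C (2 * d * e) * X + C (e ^ 2) := by
    rw [eq_quadratic_of_degree_le_two hq2]
    simp only [map_add, map_mul, map_pow, map_ofNat]
    ring
  rw [hexp] at hq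
  have hc4 := congrArg (coeff · 4) hq
  have hc3 := congrArg (coeff · 3) hq
  have hc2 := congrArg (coeff · 2) hq
  have hc0 := congrArg (coeff · 0) hq
  simp only [coeff_add, coeff_C_mul_X_pow, coeff_C_mul_X, coeff_C] at hc4 hc3 hc2 hc0
  norm_num at hc4 hc3 hc2 hc0
  have hd : d = 0 := by
    rcases hc3 with (h | h) | h
    exacts [absurd h h2, by simp [h] at hc4, h]
  rw [discrim, hc2, hc0, hd]
  linear_combination (-4 * e ^ 2) * hc4

theorem RatFunc.one_add_four_mul_sq_mul_sq_eq_algebraMap {F : Type*} [Field F] (t : F) :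
    (1 + 4 * (X * C t / (X ^ 2 + C t)) ^ 2) * (X ^ 2 + C t) ^ 2
      = algebraMap F[X] (RatFunc F) (.X ^ 4 + .C (2 * t + 4 * t ^ 2) * .X ^ 2 + .C (t ^ 2)) := by
  have hD : (X ^ 2 + C t : RatFunc F) ≠ 0 := by
    simpa only [map_add, map_pow, algebraMap_X, algebraMap_C] using
      (map_ne_zero_iff _ (IsFractionRing.injective F[X] (RatFunc F))).2
        (monic_X_pow_add_C t two_ne_zero).ne_zero
  simp only [map_add, map_mul, map_pow, algebraMap_X, algebraMap_C]
  field_simp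
  simp only [map_ofNat]
  ring

/-- For a field `F` of characteristic `≠ 2` and `t ∈ F \ {0, -1}`,
the element `1 + 4 (Y t / (Y² + t))²` is not a square in `F(Y)`. -/
theorem stmt_13 {F : Type*} [Field F] (h2 : ringChar F ≠ 2)
    (t : F) (ht0 : t ≠ 0) (ht1 : t ≠ -1) :
    ¬ ∃ s : RatFunc F,
      s ^ 2 = 1 + 4 * (RatFunc.X * RatFunc.C t / (RatFunc.X ^ 2 + RatFunc.C t)) ^ 2 := by
  rintro ⟨s, hs⟩
  have h2' : (2 : F) ≠ 0 := Ring.two_ne_zero h2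
  obtain ⟨q, hq, -⟩ := IsIntegrallyClosed.exists_pow_eq_of_pow_eq_algebraMap two_pos
    (x := s * (RatFunc.X ^ 2 + RatFunc.C t))
    (by rw [mul_pow, hs, RatFunc.one_add_four_mul_sq_mul_sq_eq_algebraMap])
  have hdisc := discrim_eq_zero_of_isSquare_X_pow_four_add h2' ⟨q, by rw [← hq, sq]⟩
  have key : 2 ^ 4 * t ^ 3 * (t + 1) = 0 := by
    rw [discrim] at hdisc
    linear_combination hdisc
  rcases mul_eq_zero.1 key with h | h
  · exact mul_ne_zero (pow_ne_zero 4 h2') (pow_ne_zero 3 ht0) h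
  · exact ht1 (eq_neg_of_add_eq_zero_left h)
end
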